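/- Define $y_C(t) = 1 - e^{-at}\left(1 - \frac{at}{b-1}\right) - \frac{(at)^b}{b-1}\Gamma(2-b, at)$ for $a > 0$ and $b \in (1,2)$. Then as $t \to 0^+$, $y_C(t) = \frac{ab}{b-1}t - \frac{\Gamma(2-b)\,a^b}{b-1}\,t^b + O(t^2)$; in particular $\lim_{t \to 0^+} y_C(t)/t = ab/(b-1)$. -/

import Mathlib

/-!
With `x = a t` the remainder `y_C(t) - (ab/(b-1) t - Γ(2-b) a^b/(b-1) t^b)` depends on `x` only.
Splitting off the lower incomplete gamma function, `Γ(2-b) = γ(2-b, x) + Γ(2-b, x)`, turns it into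
`-(e^{-x} - 1 + x)(1 - x/(b-1)) - x²/(b-1) + x^b γ(2-b, x)/(b-1)`, and every term is `O(x²)`
because `|e^{-x} - 1 + x| ≤ x²` and `γ(2-b, x) ≤ ∫_0^x w^{1-b} dw = x^{2-b}/(2-b)`.
The limit of `y_C(t)/t` follows, as `t^b` and `t²` are `o(t)`.
-/

open Set MeasureTheory Real Filter Asymptotics Topology

/-- The upper incomplete gamma function `Γ(z,p) = ∫_p^∞ e^{-w} w^{z-1} dw`. -/
noncomputable def igamma (z p : ℝ) : ℝ := ∫ w in Set.Ioi p, Real.exp (-w) * w ^ (z - 1)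

noncomputable def lowerIGamma (s x : ℝ) : ℝ := ∫ w in Ioc 0 x, exp (-w) * w ^ (s - 1)

lemma Gamma_eq_lowerIGamma_add_igamma {s x : ℝ} (hs : 0 < s) (hx : 0 ≤ x) :
    Gamma s = lowerIGamma s x + igamma s x := by
  rw [Gamma_eq_integral hs, lowerIGamma, igamma, ← Ioc_union_Ioi_eq_Ioi hx,
    setIntegral_union (Ioc_disjoint_Ioi le_rfl) measurableSet_Ioi
      ((GammaIntegral_convergent hs).mono_set Ioc_subset_Ioi_self)
      ((GammaIntegral_convergent hs).mono_set (Ioi_subset_Ioi hx))]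

lemma lowerIGamma_nonneg (s x : ℝ) : 0 ≤ lowerIGamma s x :=
  setIntegral_nonneg measurableSet_Ioc fun _ hw =>
    mul_nonneg (exp_pos _).le (rpow_nonneg hw.1.le _)

lemma lowerIGamma_le {s x : ℝ} (hs : 0 < s) (hx : 0 ≤ x) : lowerIGamma s x ≤ x ^ s / s := by
  have hexp : lowerIGamma s x ≤ ∫ w in Ioc 0 x, w ^ (s - 1) := by
    refine setIntegral_mono_on ((GammaIntegral_convergent hs).mono_set Ioc_subset_Ioi_self)
      ((intervalIntegrable_iff_integrableOn_Ioc_of_le hx).1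
        (intervalIntegral.intervalIntegrable_rpow' (by linarith))) measurableSet_Ioc
      fun w hw => ?_
    exact mul_le_of_le_one_left (rpow_nonneg hw.1.le _) (exp_le_one_iff.2 (by linarith [hw.1]))
  have hpow : ∫ w in Ioc 0 x, w ^ (s - 1) = x ^ s / s := by
    rw [← intervalIntegral.integral_of_le hx, integral_rpow (Or.inl (by linarith)),
      zero_rpow (by linarith), sub_add_cancel, sub_zero]
  exact hpow ▸ hexp

lemma expansion_remainder_eq {b x : ℝ} (hb : b ∈ Ioo 1 2) (hx : 0 ≤ x) :
    1 - exp (-x) * (1 - x / (b - 1)) - x ^ b / (b - 1) * igamma (2 - b) x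
        - (b / (b - 1) * x - Gamma (2 - b) / (b - 1) * x ^ b)
      = -(exp (-x) - 1 + x) * (1 - x / (b - 1)) - x ^ 2 / (b - 1)
        + x ^ b * lowerIGamma (2 - b) x / (b - 1) := by
  have hb1 : b - 1 ≠ 0 := by linarith [hb.1]
  rw [Gamma_eq_lowerIGamma_add_igamma (by linarith [hb.2]) hx]
  field_simp
  ring

lemma abs_expansion_remainder_le {b x : ℝ} (hb : b ∈ Ioo 1 2) (hx0 : 0 ≤ x) (hx1 : x ≤ 1) :
    |1 - exp (-x) * (1 - x / (b - 1)) - x ^ b / (b - 1) * igamma (2 - b) x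
        - (b / (b - 1) * x - Gamma (2 - b) / (b - 1) * x ^ b)|
      ≤ (1 + 2 / (b - 1) + 1 / ((b - 1) * (2 - b))) * x ^ 2 := by
  rw [expansion_remainder_eq hb hx0]
  have hb1' : 0 < b - 1 := by linarith [hb.1]
  have hb2' : 0 < 2 - b := by linarith [hb.2]
  have hexp : |exp (-x) - 1 + x| ≤ x ^ 2 := by
    simpa using abs_exp_sub_one_sub_id_le (x := -x) (by rwa [abs_neg, abs_of_nonneg hx0])
  have hfactor : |1 - x / (b - 1)| ≤ 1 + 1 / (b - 1) := by
    rw [abs_le]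
    constructor
    · linarith [div_le_div_of_nonneg_right hx1 hb1'.le]
    · linarith [div_nonneg hx0 hb1'.le, one_div_pos.2 hb1']
  have hlower : x ^ b * lowerIGamma (2 - b) x ≤ x ^ 2 / (2 - b) := by
    calc x ^ b * lowerIGamma (2 - b) x ≤ x ^ b * (x ^ (2 - b) / (2 - b)) :=
          mul_le_mul_of_nonneg_left (lowerIGamma_le hb2' hx0) (rpow_nonneg hx0 _)
      _ = x ^ 2 / (2 - b) := by
          rw [mul_div_assoc', ← rpow_add' hx0 (by norm_num), add_sub_cancel, rpow_two]
  have hlower0 : 0 ≤ x ^ b * lowerIGamma (2 - b) x :=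
    mul_nonneg (rpow_nonneg hx0 _) (lowerIGamma_nonneg _ _)
  calc _ ≤ |exp (-x) - 1 + x| * |1 - x / (b - 1)| + x ^ 2 / (b - 1)
          + x ^ b * lowerIGamma (2 - b) x / (b - 1) := by
        have hsq : 0 ≤ x ^ 2 / (b - 1) := by positivity
        have hdiv : 0 ≤ x ^ b * lowerIGamma (2 - b) x / (b - 1) := div_nonneg hlower0 hb1'.le
        rw [← abs_mul, abs_le]
        constructor <;> linarith [le_abs_self ((exp (-x) - 1 + x) * (1 - x / (b - 1))),
          neg_abs_le ((exp (-x) - 1 + x) * (1 - x / (b - 1)))]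
    _ ≤ x ^ 2 * (1 + 1 / (b - 1)) + x ^ 2 / (b - 1) + x ^ 2 / (2 - b) / (b - 1) := by
        gcongr
    _ = _ := by field_simp; ring

lemma expansion_remainder_isBigO {b : ℝ} (hb : b ∈ Ioo 1 2) :
    (fun x => 1 - exp (-x) * (1 - x / (b - 1)) - x ^ b / (b - 1) * igamma (2 - b) x
        - (b / (b - 1) * x - Gamma (2 - b) / (b - 1) * x ^ b))
      =O[𝓝[>] 0] fun x => x ^ 2 := by
  refine IsBigO.of_bound (1 + 2 / (b - 1) + 1 / ((b - 1) * (2 - b))) ?_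
  filter_upwards [Ioc_mem_nhdsGT zero_lt_one] with x hx
  rw [norm_eq_abs, norm_eq_abs, abs_of_nonneg (sq_nonneg x)]
  exact abs_expansion_remainder_le hb hx.1.le hx.2

lemma rpow_isLittleO_id_nhdsGT_zero {b : ℝ} (hb : 1 < b) :
    (fun t : ℝ => t ^ b) =o[𝓝[>] 0] id := by
  refine (isLittleO_iff_tendsto' ?_).2 ?_
  · filter_upwards [self_mem_nhdsWithin] with t ht h0 using absurd h0 (ne_of_gt ht)
  · have hcont : Tendsto (fun t : ℝ => t ^ (b - 1)) (𝓝[>] 0) (𝓝 0) := by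
      simpa [zero_rpow (by linarith : b - 1 ≠ 0)] using
        (continuousAt_rpow_const 0 (b - 1) (Or.inr (by linarith))).tendsto.mono_left
          nhdsWithin_le_nhds
    refine hcont.congr' ?_
    filter_upwards [self_mem_nhdsWithin] with t (ht : 0 < t)
    rw [id, rpow_sub_one ht.ne']

lemma tendsto_div_of_sub_mul_isLittleO {f : ℝ → ℝ} {c : ℝ}
    (h : (fun t => f t - c * t) =o[𝓝[>] 0] id) :
    Tendsto (fun t => f t / t) (𝓝[>] 0) (𝓝 c) := by
  have := h.tendsto_div_nhds_zero.add_const c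
  rw [zero_add] at this
  refine this.congr' ?_
  filter_upwards [self_mem_nhdsWithin] with t (ht : 0 < t)
  simp [sub_div, ht.ne']

/-- For `y_C(t) = 1 - e^{-at}(1 - at/(b-1)) - (at)^b/(b-1) Γ(2-b, at)` with `b ∈ (1,2)`:
`y_C(t) = (ab/(b-1)) t - (Γ(2-b) a^b/(b-1)) t^b + O(t²)` as `t → 0⁺`, and
`y_C(t)/t → ab/(b-1)`. -/
theorem stmt_17 (a b : ℝ) (ha : 0 < a) (hb : b ∈ Set.Ioo (1:ℝ) 2)
    (yC : ℝ → ℝ)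
    (hyC : ∀ t, yC t = 1 - Real.exp (-(a * t)) * (1 - a * t / (b - 1)) -
        (a * t) ^ b / (b - 1) * igamma (2 - b) (a * t)) :
    (fun t => yC t - (a * b / (b - 1) * t - Real.Gamma (2 - b) * a ^ b / (b - 1) * t ^ b))
      =O[nhdsWithin 0 (Set.Ioi 0)] (fun t => t ^ 2) ∧
    Filter.Tendsto (fun t => yC t / t) (nhdsWithin 0 (Set.Ioi 0))
      (nhds (a * b / (b - 1))) := by
  have hscale : Tendsto (fun t => a * t) (𝓝[>] 0) (𝓝[>] 0) := by
    have := tendsto_comap (f := fun t => a * t) (x := 𝓝[>] (0 : ℝ))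
    rwa [comap_mulLeft_nhdsGT_zero ha] at this
  have hO : (fun t => yC t - (a * b / (b - 1) * t - Real.Gamma (2 - b) * a ^ b / (b - 1) * t ^ b))
      =O[𝓝[>] 0] fun t => t ^ 2 := by
    have := (expansion_remainder_isBigO hb).comp_tendsto hscale
    refine (this.trans ?_).congr' ?_ EventuallyEq.rfl
    · exact (isBigO_refl _ _).const_mul_left (a ^ 2) |>.congr_left fun t => by simp [mul_pow]
    · filter_upwards [self_mem_nhdsWithin] with t (ht : 0 < t)
      simp only [Function.comp_apply, hyC, mul_rpow ha.le ht.le]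
      ring
  have hsq : (fun t : ℝ => t ^ 2) =o[𝓝[>] 0] id :=
    ((isLittleO_pow_pow (𝕜 := ℝ) one_lt_two).mono nhdsWithin_le_nhds).congr_right pow_one
  refine ⟨hO, tendsto_div_of_sub_mul_isLittleO ?_⟩
  have hpow := (rpow_isLittleO_id_nhdsGT_zero hb.1).const_mul_left (Gamma (2 - b) * a ^ b / (b - 1))
  exact ((hO.trans_isLittleO hsq).sub hpow).congr_left fun t => by ring
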